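/- Uniform-mesh jump bound for ENO interpolation: on a uniform mesh with spacing h, the p-th order ENO interpolation midpoint jump satisfies (v⁺_{1/2} − v⁻_{1/2})/(v_1 − v_0) ≤ c_p := 2^{p−1}/(p−1)! · Σ_{r=0}^{p−1} Π_{m=1}^{p−1} |1/2 + r − m|. In particular c_1 = 1, c_2 = 2, c_3 = 3.5, c_4 = 6, c_5 = 10.375, c_6 = 18.25. -/

import Mathlib

/-- Divided differences of the data `V` at the points `x`:
`dd x V j i = V[x_i, ..., x_{i+j}]`. -/
noncomputable def dd (x V : ℤ → ℝ) : ℕ → ℤ → ℝ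
  | 0, i => V i
  | j + 1, i => (dd x V j (i + 1) - dd x V j i) / (x (i + (j : ℤ) + 1) - x i)

/-- ENO interpolation stencil offsets for the grid point `x_i`:
`enoOffsetI x v i j` is the left offset `r_j` of the `j`-point stencil
`{x_{i+r_j}, ..., x_{i+r_j+j-1}}` chosen by the ENO selection procedure applied to
point values `v` at points `x`. -/
noncomputable def enoOffsetI (x v : ℤ → ℝ) (i : ℤ) : ℕ → ℤ
  | 0 => 0
  | 1 => 0
  | j + 2 =>
    let r := enoOffsetI x v i (j + 1)
    if |dd x v (j + 1) (i + r - 1)| < |dd x v (j + 1) (i + r)| then r - 1 else r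

open Finset Polynomial

namespace EnoAux

/-- Evaluation of the interpolant on the stencil `{r, ..., r+n}`. -/
noncomputable def ev (x v : ℤ → ℝ) (n : ℕ) (r : ℤ) (y : ℝ) : ℝ :=
  (Lagrange.interpolate (Finset.Icc r (r + (n : ℤ))) x v).eval y

variable {x v : ℤ → ℝ}

lemma card_Icc_int (r : ℤ) (n : ℕ) : (Finset.Icc r (r + (n : ℤ))).card = n + 1 := by
  rw [Int.card_Icc]; omega

lemma injOn_of_inj (hinj : Function.Injective x) (s : Finset ℤ) :
    Set.InjOn x s := fun a _ b _ hab => hinj hab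

lemma ev_zero (hinj : Function.Injective x) (r : ℤ) (y : ℝ) : ev x v 0 r y = v r := by
  unfold ev
  norm_num [Lagrange.interpolate_singleton]

lemma neville (hinj : Function.Injective x) (n : ℕ) (r : ℤ) (y : ℝ) :
    ev x v (n + 1) r y =
      ((y - x r) * ev x v n (r + 1) y - (y - x (r + (n : ℤ) + 1)) * ev x v n r y) /
        (x (r + (n : ℤ) + 1) - x r) := by
  have hne : x (r + (n : ℤ) + 1) - x r ≠ 0 := by
    intro hcon
    have := hinj (sub_eq_zero.mp hcon)
    omega
  set b : ℤ := r + (n : ℤ) + 1 with hb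
  have hQ := Lagrange.degree_interpolate_lt (s := Finset.Icc (r+1) b) (v := x) v
    (injOn_of_inj hinj _)
  have hP := Lagrange.degree_interpolate_lt (s := Finset.Icc r (r + (n:ℤ))) (v := x) v
    (injOn_of_inj hinj _)
  set Q := Lagrange.interpolate (Finset.Icc (r+1) b) x v with hQdef
  set P := Lagrange.interpolate (Finset.Icc r (r + (n:ℤ))) x v with hPdef
  have hcard1 : (Finset.Icc (r+1) b).card = n + 1 := by rw [Int.card_Icc]; omega
  have hcard2 : (Finset.Icc r (r + (n:ℤ))).card = n + 1 := card_Icc_int r n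
  have hcard3 : (Finset.Icc r b).card = n + 2 := by rw [Int.card_Icc]; omega
  -- the combined polynomial
  set F : ℝ[X] := Polynomial.C ((x b - x r)⁻¹) *
    ((X - Polynomial.C (x r)) * Q - (X - Polynomial.C (x b)) * P) with hF
  have hdegF : F.degree < ((n + 2 : ℕ) : WithBot ℕ) := by
    have h1 : ((X - Polynomial.C (x r)) * Q).degree < ((n + 2 : ℕ) : WithBot ℕ) := by
      rw [degree_mul, degree_X_sub_C]
      calc 1 + Q.degree < 1 + ((n+1 : ℕ) : WithBot ℕ) := by
            exact WithBot.add_lt_add_left (by simp) (hcard1 ▸ hQ)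
        _ = ((n + 2 : ℕ) : WithBot ℕ) := by
            push_cast; ring
    have h2 : ((X - Polynomial.C (x b)) * P).degree < ((n + 2 : ℕ) : WithBot ℕ) := by
      rw [degree_mul, degree_X_sub_C]
      calc 1 + P.degree < 1 + ((n+1 : ℕ) : WithBot ℕ) := by
            exact WithBot.add_lt_add_left (by simp) (hcard2 ▸ hP)
        _ = ((n + 2 : ℕ) : WithBot ℕ) := by
            push_cast; ring
    calc F.degree ≤ (Polynomial.C ((x b - x r)⁻¹)).degree +
          ((X - Polynomial.C (x r)) * Q - (X - Polynomial.C (x b)) * P).degree :=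
            degree_mul_le _ _
      _ ≤ 0 + ((X - Polynomial.C (x r)) * Q - (X - Polynomial.C (x b)) * P).degree := by
            gcongr
            exact degree_C_le
      _ = ((X - Polynomial.C (x r)) * Q - (X - Polynomial.C (x b)) * P).degree := by
            rw [zero_add]
      _ < ((n + 2 : ℕ) : WithBot ℕ) := lt_of_le_of_lt (degree_sub_le _ _) (max_lt h1 h2)
  have hFeq : F = Lagrange.interpolate (Finset.Icc r b) x v := by
    apply Lagrange.eq_interpolate_of_eval_eq _ (injOn_of_inj hinj _)
      (by rw [hcard3]; exact_mod_cast hdegF)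
    intro i hi
    rw [Finset.mem_Icc] at hi
    have hQi : i ≠ r → Q.eval (x i) = v i := fun hir =>
      Lagrange.eval_interpolate_at_node _ (injOn_of_inj hinj _)
        (Finset.mem_Icc.mpr ⟨by omega, hi.2⟩)
    have hPi : i ≠ b → P.eval (x i) = v i := fun hib =>
      Lagrange.eval_interpolate_at_node _ (injOn_of_inj hinj _)
        (Finset.mem_Icc.mpr ⟨hi.1, by omega⟩)
    simp only [hF, eval_mul, eval_C, eval_sub, eval_X]
    rcases eq_or_ne i r with rfl | hir
    · rw [hPi (by omega)]
      field_simp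
      ring
    · rcases eq_or_ne i b with rfl | hib
      · rw [hQi (by omega)]
        field_simp
        try ring
      · rw [hQi hir, hPi hib]
        field_simp
        ring
  have hbb : r + ((n + 1 : ℕ) : ℤ) = b := by push_cast; ring
  have h0 : ev x v (n+1) r y = F.eval y := by
    unfold ev
    rw [hbb, ← hFeq]
  have h1 : ev x v n (r+1) y = Q.eval y := by
    unfold ev
    rw [hQdef, show r + 1 + (n:ℤ) = b from by omega]
  have h2 : ev x v n r y = P.eval y := rfl
  rw [h0, h1, h2]
  simp only [hF, eval_mul, eval_C, eval_sub, eval_X]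
  rw [div_eq_mul_inv, mul_comm]


lemma xsub_ne (hinj : Function.Injective x) {a b : ℤ} (hab : a ≠ b) : x a - x b ≠ 0 :=
  fun hcon => hab (hinj (sub_eq_zero.mp hcon))

lemma newton (hinj : Function.Injective x) (n : ℕ) : ∀ r : ℤ, ∀ y : ℝ,
    (ev x v (n+1) r y = ev x v n r y +
      dd x v (n+1) r * ∏ m ∈ range (n+1), (y - x (r + (m : ℤ)))) ∧
    (ev x v (n+1) r y = ev x v n (r+1) y +
      dd x v (n+1) r * ∏ m ∈ range (n+1), (y - x (r + 1 + (m : ℤ)))) := by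
  induction n with
  | zero =>
    intro r y
    have hnev := neville (v := v) hinj 0 r y
    have hD : x (r + 1) - x r ≠ 0 := xsub_ne hinj (by omega)
    have hdd : dd x v 1 r = (v (r+1) - v r) / (x (r + 1) - x r) := by
      show (dd x v 0 (r+1) - dd x v 0 r) / (x (r + ((0:ℕ) : ℤ) + 1) - x r) = _
      norm_num [dd]
    simp only [Nat.cast_zero, add_zero] at hnev
    rw [ev_zero hinj, ev_zero hinj] at hnev
    refine ⟨?_, ?_⟩ <;>
    · rw [hnev, ev_zero hinj, hdd]
      rw [prod_range_succ]
      simp only [range_zero, prod_empty, one_mul, Nat.cast_zero, add_zero]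
      field_simp
      try ring
  | succ n IH =>
    intro r y
    have hnev := neville (v := v) hinj (n+1) r y
    have hD : x (r + ((n:ℤ)+1) + 1) - x r ≠ 0 := xsub_ne hinj (by omega)
    have hc1 : r + (((n+1 : ℕ)) : ℤ) + 1 = r + ((n:ℤ)+1) + 1 := by push_cast; ring
    rw [hc1] at hnev
    have hIH1 := (IH (r+1) y).1
    have hIH2 := (IH r y).2
    set π : ℝ := ∏ m ∈ range (n+1), (y - x (r + 1 + (m : ℤ))) with hπ
    have hdd : dd x v (n+2) r = (dd x v (n+1) (r+1) - dd x v (n+1) r) /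
        (x (r + ((n:ℤ)+1) + 1) - x r) := by
      show (dd x v (n+1) (r+1) - dd x v (n+1) r) / (x (r + (((n+1:ℕ)) : ℤ) + 1) - x r) = _
      rw [hc1]
    have hprod1 : ∏ m ∈ range (n+2), (y - x (r + (m : ℤ))) = (y - x r) * π := by
      rw [prod_range_succ']
      simp only [Nat.cast_zero, add_zero]
      rw [mul_comm]
      congr 1
      apply Finset.prod_congr rfl
      intro m _
      congr 2
      push_cast
      ring
    have hprod2 : ∏ m ∈ range (n+2), (y - x (r + 1 + (m : ℤ))) =
        π * (y - x (r + ((n:ℤ)+1) + 1)) := by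
      have hcast : r + 1 + (((n+1:ℕ)) : ℤ) = r + ((n:ℤ)+1) + 1 := by push_cast; ring
      rw [prod_range_succ, hcast]
    constructor
    · rw [hnev, hprod1, hdd, hIH1, hIH2]
      field_simp
      ring
    · rw [hnev, hprod2, hdd, hIH1, hIH2]
      field_simp
      ring


lemma stencil_diff (hinj : Function.Injective x) (q : ℕ) (r : ℤ) (y : ℝ) :
    ev x v q r y - ev x v q (r+1) y =
      dd x v (q+1) r * (x r - x (r + (q:ℤ) + 1)) *
        ∏ m ∈ range q, (y - x (r + 1 + (m:ℤ))) := by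
  have h1 := (newton (v := v) hinj q r y).1
  have h2 := (newton (v := v) hinj q r y).2
  have key : ev x v q r y - ev x v q (r+1) y
      = dd x v (q+1) r * ((∏ m ∈ range (q+1), (y - x (r + 1 + (m:ℤ)))) -
          ∏ m ∈ range (q+1), (y - x (r + (m:ℤ)))) := by
    linear_combination h2 - h1
  have hp1 : ∏ m ∈ range (q+1), (y - x (r + (m:ℤ))) =
      (y - x r) * ∏ m ∈ range q, (y - x (r + 1 + (m:ℤ))) := by
    rw [prod_range_succ']
    simp only [Nat.cast_zero, add_zero]
    rw [mul_comm]
    congr 1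
    apply Finset.prod_congr rfl
    intro m _
    congr 2
    push_cast
    ring
  have hp2 : ∏ m ∈ range (q+1), (y - x (r + 1 + (m:ℤ))) =
      (∏ m ∈ range q, (y - x (r + 1 + (m:ℤ)))) * (y - x (r + (q:ℤ) + 1)) := by
    rw [prod_range_succ, show r + 1 + (q:ℤ) = r + (q:ℤ) + 1 from by ring]
  rw [key, hp1, hp2]
  ring

section Grid

variable {h : ℝ} (hh : 0 < h) (hx : ∀ j, x (j + 1) = x j + h)

include hx in
lemma x_eq : ∀ j : ℤ, x j = x 0 + j * h := by
  intro j
  induction j using Int.induction_on with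
  | zero => simp
  | succ k ih => rw [hx k, ih]; push_cast; ring
  | pred k ih =>
    have := hx (-(k:ℤ) - 1)
    rw [show (-(k:ℤ) - 1 + 1) = -(k:ℤ) from by ring] at this
    rw [eq_sub_of_add_eq this.symm, ih]
    push_cast
    ring

include hx in
lemma x_sub (a b : ℤ) : x a - x b = ((a - b : ℤ) : ℝ) * h := by
  rw [x_eq hx a, x_eq hx b]
  push_cast
  ring

include hh hx in
lemma x_injective : Function.Injective x := by
  intro a b hab
  have := x_sub (x := x) hx a b
  rw [hab, sub_self] at this
  have h2 : ((a - b : ℤ) : ℝ) = 0 := by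
    rcases mul_eq_zero.mp this.symm with h' | h'
    · exact h'
    · exact absurd h' (ne_of_gt hh)
  exact_mod_cast sub_eq_zero.mp (by exact_mod_cast h2)

end Grid


lemma enoOffset_bounds (i : ℤ) : ∀ n : ℕ, 1 ≤ n →
    1 - (n : ℤ) ≤ enoOffsetI x v i n ∧ enoOffsetI x v i n ≤ 0 := by
  intro n hn
  induction n, hn using Nat.le_induction with
  | base => simp [enoOffsetI]
  | succ n hn ih =>
    obtain ⟨m, rfl⟩ : ∃ m, n = m + 1 := ⟨n - 1, by omega⟩
    have hunf : enoOffsetI x v i (m+2) =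
        if |dd x v (m + 1) (i + enoOffsetI x v i (m+1) - 1)| <
            |dd x v (m + 1) (i + enoOffsetI x v i (m+1))| then
          enoOffsetI x v i (m+1) - 1
        else enoOffsetI x v i (m+1) := rfl
    rw [hunf]
    push_cast at ih ⊢
    split_ifs <;> omega

section Chain

variable {h : ℝ}

lemma chain (hh : 0 < h) (hx : ∀ j, x (j + 1) = x j + h) :
    ∀ n : ℕ, 1 ≤ n → ∀ s : ℤ,
      min (enoOffsetI x v 0 n) (1 + enoOffsetI x v 1 n) ≤ s →
      s < max (enoOffsetI x v 0 n) (1 + enoOffsetI x v 1 n) →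
      |dd x v n s| ≤ 2 ^ (n-1) * |v 1 - v 0| / ((n.factorial : ℝ) * h ^ n) := by
  intro n hn
  induction n, hn using Nat.le_induction with
  | base =>
    intro s h1 h2
    have he : enoOffsetI x v 0 1 = 0 := rfl
    have he2 : enoOffsetI x v 1 1 = 0 := rfl
    rw [he, he2] at h1 h2
    norm_num at h1 h2
    have hs : s = 0 := by omega
    subst hs
    have hd : dd x v 1 0 = (v 1 - v 0) / (x 1 - x 0) := by
      show (dd x v 0 (0+1) - dd x v 0 0) / (x ((0:ℤ) + ((0:ℕ):ℤ) + 1) - x 0) = _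
      norm_num [dd]
    rw [hd, x_sub hx 1 0]
    rw [abs_div]
    norm_num [abs_of_pos hh]
  | succ n hn ih =>
    intro s hmin hmax
    obtain ⟨m, rfl⟩ : ∃ m, n = m + 1 := ⟨n - 1, by omega⟩
    simp only [Nat.add_sub_cancel] at ih ⊢
    simp only [show m + 1 + 1 = m + 2 from rfl] at hmin hmax ⊢
    set ρ := enoOffsetI x v 0 (m+1) with hρ
    set τ := enoOffsetI x v 1 (m+1) with hτ
    have hρ' : enoOffsetI x v 0 (m+2) =
        if |dd x v (m + 1) (0 + ρ - 1)| < |dd x v (m + 1) (0 + ρ)| then ρ - 1 else ρ := rfl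
    have hτ' : enoOffsetI x v 1 (m+2) =
        if |dd x v (m + 1) (1 + τ - 1)| < |dd x v (m + 1) (1 + τ)| then τ - 1 else τ := rfl
    by_cases hAB : ρ = 1 + τ
    · exfalso
      have heq : enoOffsetI x v 0 (m+2) = 1 + enoOffsetI x v 1 (m+2) := by
        rw [hρ', hτ', hAB, show (0:ℤ) + (1 + τ) - 1 = 1 + τ - 1 from by ring,
          show (0:ℤ) + (1 + τ) = 1 + τ from by ring]
        split_ifs <;> ring
      rw [heq] at hmin hmax
      simp only [min_self, max_self] at hmin hmax
      omega
    · set M : ℝ := 2 ^ m * |v 1 - v 0| / (((m+1).factorial : ℝ) * h ^ (m+1)) with hM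
      set A := min ρ (1 + τ) with hA
      set B := max ρ (1 + τ) with hB
      have hAltB : A < B := min_lt_max.mpr hAB
      have hAρ : A ≤ ρ ∧ ρ ≤ B := ⟨min_le_left _ _, le_max_left _ _⟩
      have hAτ : A ≤ 1 + τ ∧ 1 + τ ≤ B := ⟨min_le_right _ _, le_max_right _ _⟩
      have hρrange : enoOffsetI x v 0 (m+2) ≤ ρ ∧ ρ - 1 ≤ enoOffsetI x v 0 (m+2) := by
        rw [hρ']; split_ifs <;> omega
      have hτrange : enoOffsetI x v 1 (m+2) ≤ τ ∧ τ - 1 ≤ enoOffsetI x v 1 (m+2) := by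
        rw [hτ']; split_ifs <;> omega
      have hHelper : ∀ t : ℤ,
          min (enoOffsetI x v 0 (m+2)) (1 + enoOffsetI x v 1 (m+2)) ≤ t →
          t ≤ max (enoOffsetI x v 0 (m+2)) (1 + enoOffsetI x v 1 (m+2)) →
          |dd x v (m+1) t| ≤ M := by
        intro t ht1 ht2
        by_cases htA : A ≤ t
        · by_cases htB : t < B
          · exact ih t htA htB
          · have htB' : t = B := by
              have h1 : enoOffsetI x v 0 (m+2) ≤ B := le_trans hρrange.1 hAρ.2
              have h2 : 1 + enoOffsetI x v 1 (m+2) ≤ B := by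
                have := hτrange.1; omega
              have := max_le h1 h2
              omega
            have hcase : enoOffsetI x v 0 (m+2) = B ∨ 1 + enoOffsetI x v 1 (m+2) = B := by
              have hBle : B ≤ max (enoOffsetI x v 0 (m+2)) (1 + enoOffsetI x v 1 (m+2)) := by
                omega
              rcases le_max_iff.mp hBle with h' | h'
              · left; have := le_trans hρrange.1 hAρ.2; omega
              · right; have := hτrange.1; omega
            have hddB : |dd x v (m+1) B| ≤ |dd x v (m+1) (B-1)| := by
              rcases hcase with hc | hc
              · have hρB : ρ = B := by have := hρrange.1; omega
                have hcond : ¬ (|dd x v (m + 1) (0 + ρ - 1)| < |dd x v (m + 1) (0 + ρ)|) := by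
                  intro hcon
                  rw [hρ', if_pos hcon] at hc
                  omega
                rw [not_lt, show (0:ℤ) + ρ - 1 = ρ - 1 from by ring,
                  show (0:ℤ) + ρ = ρ from by ring, hρB] at hcond
                exact hcond
              · have hτB : 1 + τ = B := by have := hτrange.1; omega
                have hcond : ¬ (|dd x v (m + 1) (1 + τ - 1)| < |dd x v (m + 1) (1 + τ)|) := by
                  intro hcon
                  rw [hτ', if_pos hcon] at hc
                  omega
                rw [not_lt, show 1 + τ - 1 = B - 1 from by omega, hτB] at hcond
                exact hcond
            have hBm1 : |dd x v (m+1) (B-1)| ≤ M := ih (B-1) (by omega) (by omega)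
            rw [htB']
            exact le_trans hddB hBm1
        · have htA' : t = A - 1 := by
            have h1 : A - 1 ≤ enoOffsetI x v 0 (m+2) := by have := hρrange.2; omega
            have h2 : A - 1 ≤ 1 + enoOffsetI x v 1 (m+2) := by have := hτrange.2; omega
            have := le_min h1 h2
            omega
          have hcase : enoOffsetI x v 0 (m+2) ≤ A - 1 ∨ 1 + enoOffsetI x v 1 (m+2) ≤ A - 1 := by
            have hmle : min (enoOffsetI x v 0 (m+2)) (1 + enoOffsetI x v 1 (m+2)) ≤ A - 1 := by
              omega
            exact min_le_iff.mp hmle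
          have hddA : |dd x v (m+1) (A-1)| ≤ |dd x v (m+1) A| := by
            rcases hcase with hc | hc
            · have hρA : ρ = A := by have := hρrange.2; have := hAρ.1; omega
              have hcond : |dd x v (m + 1) (0 + ρ - 1)| < |dd x v (m + 1) (0 + ρ)| := by
                by_contra hcon
                rw [hρ', if_neg hcon] at hc
                omega
              rw [show (0:ℤ) + ρ - 1 = ρ - 1 from by ring,
                show (0:ℤ) + ρ = ρ from by ring, hρA] at hcond
              exact le_of_lt hcond
            · have hτA : 1 + τ = A := by have := hτrange.2; have := hAτ.1; omega
              have hcond : |dd x v (m + 1) (1 + τ - 1)| < |dd x v (m + 1) (1 + τ)| := by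
                by_contra hcon
                rw [hτ', if_neg hcon] at hc
                omega
              rw [show 1 + τ - 1 = A - 1 from by omega, hτA] at hcond
              exact le_of_lt hcond
          have hAM : |dd x v (m+1) A| ≤ M := ih A le_rfl hAltB
          rw [htA']
          exact le_trans hddA hAM
      have hs1 := hHelper s hmin (by omega)
      have hs2 := hHelper (s+1) (by omega) (by omega)
      have hdd : dd x v (m+2) s = (dd x v (m+1) (s+1) - dd x v (m+1) s) /
          (x (s + ((m+1:ℕ) : ℤ) + 1) - x s) := rfl
      have hden : x (s + ((m+1:ℕ) : ℤ) + 1) - x s = ((m:ℝ) + 2) * h := by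
        rw [x_sub hx]
        push_cast
        ring
      have hpos : (0:ℝ) < ((m:ℝ) + 2) * h := by positivity
      rw [hdd, hden, abs_div, abs_of_pos hpos]
      rw [div_le_iff₀ hpos]
      have hnum : |dd x v (m+1) (s+1) - dd x v (m+1) s| ≤ 2 * M :=
        le_trans (abs_sub _ _) (by linarith)
      have hfact : ((m+2).factorial : ℝ) = ((m:ℝ) + 2) * ((m+1).factorial : ℝ) := by
        rw [Nat.factorial_succ]
        push_cast
        ring
      have hkey : 2 ^ (m+1) * |v 1 - v 0| / (((m+2).factorial : ℝ) * h ^ (m+2)) *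
          (((m:ℝ) + 2) * h) = 2 * M := by
        have hfp : (0:ℝ) < ((m+1).factorial : ℝ) := by positivity
        rw [hM, hfact, pow_succ (2:ℝ) m, pow_succ h (m+1)]
        field_simp
      linarith

end Chain

lemma telescope (f : ℤ → ℝ) (a b : ℤ) (hab : a ≤ b) :
    f a - f b = ∑ r ∈ Finset.Ico a b, (f r - f (r+1)) := by
  have hn : b = a + ((b - a).toNat : ℤ) := by omega
  have hmap : Finset.Ico a b = (Finset.range (b-a).toNat).map
      ⟨fun (i:ℕ) => a + (i:ℤ), show Function.Injective _ from fun i j hij => by simp at hij; omega⟩ := by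
    ext t
    simp only [Finset.mem_Ico, Finset.mem_map, Finset.mem_range, Function.Embedding.coeFn_mk]
    constructor
    · intro ht
      exact ⟨(t - a).toNat, by omega, by omega⟩
    · rintro ⟨k, hk, rfl⟩
      omega
  rw [hmap, Finset.sum_map]
  simp only [Function.Embedding.coeFn_mk]
  have h2 : ∀ k : ℕ, f (a + (k:ℤ)) - f (a + (k:ℤ) + 1)
      = f (a + (k:ℤ)) - f (a + ((k+1 : ℕ) : ℤ)) := by
    intro k
    congr 2
    push_cast
    ring
  rw [Finset.sum_congr rfl (fun k _ => h2 k), Finset.sum_range_sub' (f := fun i : ℕ => f (a + (i:ℤ)))]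
  rw [Nat.cast_zero, add_zero, ← hn]

lemma Ico_neg_map (q : ℕ) : Finset.Ico (-(q:ℤ)) 1 =
    (Finset.range (q+1)).map ⟨fun (k:ℕ) => -(k:ℤ), show Function.Injective _ from fun a b hab => by simp at hab; omega⟩ := by
  ext t
  simp only [Finset.mem_Ico, Finset.mem_map, Finset.mem_range, Function.Embedding.coeFn_mk]
  constructor
  · intro ht
    exact ⟨(-t).toNat, by omega, by omega⟩
  · rintro ⟨k, hk, rfl⟩
    omega

lemma Icc_one_map (q : ℕ) : Finset.Icc 1 q =
    (Finset.range q).map ⟨fun m => m + 1, show Function.Injective _ from fun a b hab => by simp at hab; omega⟩ := by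
  ext t
  simp only [Finset.mem_Icc, Finset.mem_map, Finset.mem_range, Function.Embedding.coeFn_mk]
  constructor
  · intro ht
    exact ⟨t - 1, by omega, by omega⟩
  · rintro ⟨k, hk, rfl⟩
    omega

end EnoAux

set_option maxHeartbeats 1000000 in
lemma cvals (c : ℕ → ℝ)
    (hc : ∀ q, c q = 2 ^ (q - 1) * (1 / ((q - 1).factorial : ℝ)) *
        ∑ r ∈ Finset.range q, ∏ m ∈ Finset.Icc 1 (q - 1), |1 / 2 + (r : ℝ) - (m : ℝ)|) :
    c 1 = 1 ∧ c 2 = 2 ∧ c 3 = 3.5 ∧ c 4 = 6 ∧ c 5 = 10.375 ∧ c 6 = 18.25 := by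
  refine ⟨?_, ?_, ?_, ?_, ?_, ?_⟩ <;>
  · rw [hc]
    norm_num [Finset.sum_range_succ, EnoAux.Icc_one_map, Finset.prod_map,
      Finset.prod_range_succ, abs_of_pos, abs_of_nonneg, Nat.factorial]

open EnoAux in
/-- uniform-mesh bound on the relative midpoint jump of `p`-th order
ENO interpolation, with the explicit values of the constants `c_p` for `p ≤ 6`. -/
theorem eno_interpolation_uniform_jump_bound (p : ℕ) (hp : 1 ≤ p) (h : ℝ)
    (hh : 0 < h) (x v : ℤ → ℝ) (hx : ∀ j, x (j + 1) = x j + h)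
    (hne : v 1 ≠ v 0) (c : ℕ → ℝ)
    (hc : ∀ q, c q = 2 ^ (q - 1) * (1 / ((q - 1).factorial : ℝ)) *
        ∑ r ∈ Finset.range q, ∏ m ∈ Finset.Icc 1 (q - 1), |1 / 2 + (r : ℝ) - (m : ℝ)|) :
    ((Lagrange.interpolate (Finset.Icc (1 + enoOffsetI x v 1 p)
          (1 + enoOffsetI x v 1 p + ((p - 1 : ℕ) : ℤ))) x v).eval ((x 0 + x 1) / 2) -
      (Lagrange.interpolate (Finset.Icc (enoOffsetI x v 0 p)
          (enoOffsetI x v 0 p + ((p - 1 : ℕ) : ℤ))) x v).eval ((x 0 + x 1) / 2)) /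
        (v 1 - v 0) ≤ c p ∧
    c 1 = 1 ∧ c 2 = 2 ∧ c 3 = 3.5 ∧ c 4 = 6 ∧ c 5 = 10.375 ∧ c 6 = 18.25 := by
  refine ⟨?_, cvals c hc⟩
  obtain ⟨q, rfl⟩ : ∃ q, p = q + 1 := ⟨p - 1, by omega⟩
  have hinj : Function.Injective x := x_injective hh hx
  have hΔ : (0:ℝ) < |v 1 - v 0| := abs_pos.mpr (sub_ne_zero.mpr hne)
  simp only [Nat.add_sub_cancel]
  set y : ℝ := (x 0 + x 1) / 2 with hy
  set rm : ℤ := enoOffsetI x v 0 (q+1) with hrm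
  set rp : ℤ := 1 + enoOffsetI x v 1 (q+1) with hrp
  show (ev x v q rp y - ev x v q rm y) / (v 1 - v 0) ≤ c (q+1)
  set f : ℤ → ℝ := fun r => ev x v q r y with hf
  set A : ℤ := min rm rp with hA
  set B : ℤ := max rm rp with hB
  have hbm := enoOffset_bounds (x := x) (v := v) 0 (q+1) (by omega)
  have hbp := enoOffset_bounds (x := x) (v := v) 1 (q+1) (by omega)
  set g : ℤ → ℝ := fun r => 2^q * |v 1 - v 0| / (q.factorial : ℝ) *
      ∏ m ∈ Finset.range q, |1/2 - (r:ℝ) - 1 - (m:ℝ)| with hg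
  have hgnn : ∀ r, 0 ≤ g r := by
    intro r
    rw [hg]
    positivity
  -- per-term bound
  have hterm : ∀ r : ℤ, A ≤ r → r < B → |f r - f (r+1)| ≤ g r := by
    intro r hr1 hr2
    have hchain := chain (v := v) hh hx (q+1) (by omega) r hr1 hr2
    simp only [Nat.add_sub_cancel] at hchain
    rw [hf]
    simp only
    rw [stencil_diff (v := v) hinj q r y, abs_mul, abs_mul, Finset.abs_prod]
    have hxr : |x r - x (r + (q:ℤ) + 1)| = ((q:ℝ)+1) * h := by
      rw [x_sub hx,
        show ((r - (r + (q:ℤ) + 1) : ℤ) : ℝ) = -((q:ℝ)+1) from by push_cast; ring,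
        abs_mul, abs_neg, abs_of_nonneg (by positivity : (0:ℝ) ≤ (q:ℝ)+1), abs_of_pos hh]
    have hx1 : x 1 = x 0 + h := by
      have := hx 0
      norm_num at this
      exact this
    have hfac : ∀ m ∈ Finset.range q,
        |y - x (r + 1 + (m:ℤ))| = |1/2 - (r:ℝ) - 1 - (m:ℝ)| * h := by
      intro m _
      have hval : y - x (r + 1 + (m:ℤ)) = (1/2 - (r:ℝ) - 1 - (m:ℝ)) * h := by
        rw [hy, hx1, x_eq hx (r + 1 + (m:ℤ))]
        push_cast
        ring
      rw [hval, abs_mul, abs_of_pos hh]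
    rw [Finset.prod_congr rfl hfac, Finset.prod_mul_distrib, Finset.prod_const, Finset.card_range, hxr]
    have hPnn : (0:ℝ) ≤ ∏ m ∈ Finset.range q, |1/2 - (r:ℝ) - 1 - (m:ℝ)| :=
      Finset.prod_nonneg (fun m _ => abs_nonneg _)
    have hfact : ((q+1).factorial : ℝ) = ((q:ℝ)+1) * (q.factorial : ℝ) := by
      rw [Nat.factorial_succ]
      push_cast
      ring
    calc |dd x v (q+1) r| * (((q:ℝ)+1)*h) *
          ((∏ m ∈ Finset.range q, |1/2 - (r:ℝ) - 1 - (m:ℝ)|) * h^q)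
        ≤ (2^q * |v 1 - v 0| / (((q+1).factorial:ℝ) * h^(q+1))) * (((q:ℝ)+1)*h) *
          ((∏ m ∈ Finset.range q, |1/2 - (r:ℝ) - 1 - (m:ℝ)|) * h^q) := by
          gcongr
      _ = g r := by
          rw [hg, hfact, pow_succ]
          have h1 : (0:ℝ) < (q.factorial : ℝ) := by positivity
          field_simp
  -- telescoping
  have hAB : A ≤ B := min_le_max
  have htel : |f rp - f rm| ≤ ∑ r ∈ Finset.Ico A B, |f r - f (r+1)| := by
    rcases le_total rp rm with hcc | hcc
    · have h1 : A = rp := min_eq_right hcc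
      have h2 : B = rm := max_eq_left hcc
      calc |f rp - f rm| = |f A - f B| := by rw [h1, h2]
        _ = |∑ r ∈ Finset.Ico A B, (f r - f (r+1))| := by rw [← telescope f A B hAB]
        _ ≤ ∑ r ∈ Finset.Ico A B, |f r - f (r+1)| := Finset.abs_sum_le_sum_abs _ _
    · have h1 : A = rm := min_eq_left hcc
      have h2 : B = rp := max_eq_right hcc
      calc |f rp - f rm| = |f A - f B| := by rw [h1, h2, abs_sub_comm]
        _ = |∑ r ∈ Finset.Ico A B, (f r - f (r+1))| := by rw [← telescope f A B hAB]
        _ ≤ ∑ r ∈ Finset.Ico A B, |f r - f (r+1)| := Finset.abs_sum_le_sum_abs _ _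
  have hsum1 : ∑ r ∈ Finset.Ico A B, |f r - f (r+1)| ≤ ∑ r ∈ Finset.Ico A B, g r :=
    Finset.sum_le_sum (fun r hr =>
      hterm r (Finset.mem_Ico.mp hr).1 (Finset.mem_Ico.mp hr).2)
  have hsub : Finset.Ico A B ⊆ Finset.Ico (-(q:ℤ)) 1 := by
    intro t ht
    rw [Finset.mem_Ico] at ht ⊢
    have hb1 := hbm.1
    have hb2 := hbm.2
    have hb3 := hbp.1
    have hb4 := hbp.2
    push_cast at hb1 hb3
    omega
  have hsum2 : ∑ r ∈ Finset.Ico A B, g r ≤ ∑ r ∈ Finset.Ico (-(q:ℤ)) 1, g r :=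
    Finset.sum_le_sum_of_subset_of_nonneg hsub (fun i _ _ => hgnn i)
  have hsum3 : ∑ r ∈ Finset.Ico (-(q:ℤ)) 1, g r = c (q+1) * |v 1 - v 0| := by
    rw [Ico_neg_map q, Finset.sum_map]
    simp only [Function.Embedding.coeFn_mk]
    have hterm2 : ∀ k : ℕ, g (-(k:ℤ)) = 2 ^ q * (1 / (q.factorial : ℝ)) *
        (∏ m ∈ Finset.Icc 1 q, |1/2 + (k:ℝ) - (m:ℝ)|) * |v 1 - v 0| := by
      intro k
      rw [hg]
      simp only
      rw [Icc_one_map q, Finset.prod_map]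
      simp only [Function.Embedding.coeFn_mk]
      have hpp : ∀ m ∈ Finset.range q,
          |1/2 - (Int.cast (-(k:ℤ)) : ℝ) - 1 - (m:ℝ)| = |1/2 + (k:ℝ) - (((m+1):ℕ):ℝ)| := by
        intro m _
        push_cast
        congr 1
        ring
      rw [Finset.prod_congr rfl hpp]
      have h1 : (0:ℝ) < (q.factorial : ℝ) := by positivity
      field_simp
    rw [Finset.sum_congr rfl (fun k _ => hterm2 k), hc]
    simp only [Nat.add_sub_cancel]
    rw [← Finset.sum_mul, ← Finset.mul_sum]
  have hfinal : |f rp - f rm| ≤ c (q+1) * |v 1 - v 0| := by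
    calc |f rp - f rm| ≤ ∑ r ∈ Finset.Ico A B, |f r - f (r+1)| := htel
      _ ≤ ∑ r ∈ Finset.Ico A B, g r := hsum1
      _ ≤ ∑ r ∈ Finset.Ico (-(q:ℤ)) 1, g r := hsum2
      _ = c (q+1) * |v 1 - v 0| := hsum3
  calc (ev x v q rp y - ev x v q rm y) / (v 1 - v 0)
      ≤ |(ev x v q rp y - ev x v q rm y) / (v 1 - v 0)| := le_abs_self _
    _ = |f rp - f rm| / |v 1 - v 0| := by rw [abs_div]
    _ ≤ c (q+1) := by
        rw [div_le_iff₀ hΔ]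
        exact hfinal
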